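/- arXiv:2111.11713 — 2 statements merged into one kernel-verified Lean document; each statement's English description precedes it below -/
import Mathlib

section
/- Let H be a complex Hilbert space, l ≥ 1, and let G(w) = c₁w + c₂w² + ⋯ + c_l w^l be a polynomial with nonnegative real coefficients satisfying ∑_{m=1}^l 8(2m−1)c_m(3/8)^{2m} ≤ 1. Then for every r with 1/3 < r < 1 there exists an analytic function f : 𝔻 → 𝓑(H) with power series expansion f(z) = ∑_{k=0}^∞ A_k z^k satisfying ‖f(z)‖ ≤ 1 for all z ∈ 𝔻 and A₀ = a₀·I with a₀ ∈ ℂ, |a₀| < 1, such that ∑_{k=0}^∞ ‖A_k‖ r^k + G(∑_{k=1}^∞ k‖A_k‖² r^{2k}) > 1. In fact, for a < 1 sufficiently close to 1 the function ψ_a(z) = ((a−z)/(1−az))·I has this property; i.e., the radius 1/3 cannot be replaced by any larger quantity. -/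
/-!
The Möbius map `ψ_a(z) = (a - z) / (1 - a z)`, `0 ≤ a < 1`, maps the disk into itself and has
Taylor coefficients `a, -(1 - a²), -(1 - a²) a, -(1 - a²) a², …`, so its Bohr sum at radius `r` is
`a + (1 - a²) r / (1 - a r)`. This exceeds `1` exactly when `r (1 + 2a) > 1`, which for `r > 1/3`
holds once `a` is close enough to `1`. The term `G(⋯)` is nonnegative, so it can only help.
-/

def mobiusCoeff (a : ℝ) : ℕ → ℝ
  | 0 => a
  | k + 1 => -((1 - a ^ 2) * a ^ k)

lemma hasSum_mobiusCoeff {a : ℝ} {z : ℂ} (haz : ‖(a : ℂ) * z‖ < 1) :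
    HasSum (fun k => z ^ k * mobiusCoeff a k) ((a - z) / (1 - a * z)) := by
  have hden : (1 : ℂ) - a * z ≠ 0 := by
    intro h
    rw [← sub_eq_zero.mp h, norm_one] at haz
    exact lt_irrefl _ haz
  have htail : HasSum (fun k => z ^ (k + 1) * mobiusCoeff a (k + 1))
      (-(1 - (a : ℂ) ^ 2) * z * (1 - a * z)⁻¹) := by
    refine ((hasSum_geometric_of_norm_lt_one haz).mul_left _).congr_fun fun k => ?_
    rw [mobiusCoeff]
    push_cast
    ring
  convert HasSum.zero_add (f := fun k => z ^ k * (mobiusCoeff a k : ℂ)) htail using 1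
  simp only [mobiusCoeff, pow_zero, one_mul]
  field_simp
  ring

lemma norm_sub_le_norm_one_sub_mul {a : ℝ} (ha : |a| ≤ 1) {z : ℂ} (hz : ‖z‖ ≤ 1) :
    ‖(a : ℂ) - z‖ ≤ ‖1 - a * z‖ := by
  have hz2 : z.re * z.re + z.im * z.im ≤ 1 := by
    rw [← Complex.normSq_apply, Complex.normSq_eq_norm_sq]
    nlinarith [norm_nonneg z]
  have ha2 : a ^ 2 ≤ 1 := by nlinarith [sq_abs a, abs_nonneg a]
  rw [Complex.norm_def, Complex.norm_def]
  apply Real.sqrt_le_sqrt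
  simp only [Complex.normSq_apply, Complex.sub_re, Complex.sub_im, Complex.mul_re,
    Complex.mul_im, Complex.ofReal_re, Complex.ofReal_im, Complex.one_re, Complex.one_im]
  -- `|1 - a z|² - |a - z|² = (1 - a²)(1 - |z|²)`
  nlinarith [mul_nonneg (sub_nonneg.mpr ha2) (sub_nonneg.mpr hz2)]

lemma abs_mobiusCoeff_le_one {a : ℝ} (ha0 : 0 ≤ a) (ha1 : a ≤ 1) (k : ℕ) :
    |mobiusCoeff a k| ≤ 1 := by
  cases k with
  | zero => simpa [mobiusCoeff, abs_of_nonneg ha0] using ha1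
  | succ k =>
    have hak : a ^ k ≤ 1 := pow_le_one₀ ha0 ha1
    have ha2 : 0 ≤ 1 - a ^ 2 := by nlinarith
    rw [mobiusCoeff, abs_neg, abs_of_nonneg (by positivity)]
    nlinarith [pow_nonneg ha0 k]

lemma hasSum_abs_mobiusCoeff_mul_pow {a r : ℝ} (ha0 : 0 ≤ a) (ha1 : a ≤ 1) (hr : 0 ≤ r)
    (har : a * r < 1) :
    HasSum (fun k => |mobiusCoeff a k| * r ^ k) (a + (1 - a ^ 2) * r / (1 - a * r)) := by
  have htail : HasSum (fun k => |mobiusCoeff a (k + 1)| * r ^ (k + 1))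
      ((1 - a ^ 2) * r * (1 - a * r)⁻¹) := by
    have ha2 : 0 ≤ 1 - a ^ 2 := by nlinarith
    refine ((hasSum_geometric_of_lt_one (by positivity) har).mul_left _).congr_fun fun k => ?_
    rw [mobiusCoeff, abs_neg, abs_of_nonneg (by positivity)]
    ring
  simpa [mobiusCoeff, abs_of_nonneg ha0, div_eq_mul_inv] using
    HasSum.zero_add (f := fun k => |mobiusCoeff a k| * r ^ k) htail

lemma one_lt_mobius_bohrSum {a r : ℝ} (ha0 : 0 ≤ a) (ha1 : a < 1) (hr1 : r < 1)
    (hra : 1 < r * (1 + 2 * a)) : 1 < a + (1 - a ^ 2) * r / (1 - a * r) := by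
  have hr0 : 0 < r := by nlinarith
  have har : 0 < 1 - a * r := by nlinarith
  rw [← sub_lt_iff_lt_add', lt_div_iff₀ har]
  -- `(1 - a²) r - (1 - a)(1 - a r) = (1 - a)(r (1 + 2a) - 1)`
  nlinarith [mul_pos (sub_pos.mpr ha1) (sub_pos.mpr hra)]

lemma summable_natCast_mul_sq_mul_pow_two_mul {b : ℕ → ℝ} (hb : ∀ k, |b k| ≤ 1) {r : ℝ}
    (hr : |r| < 1) : Summable (fun k : ℕ => (k : ℝ) * b k ^ 2 * r ^ (2 * k)) := by
  have hr2 : ‖r ^ 2‖ < 1 := by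
    rw [norm_pow, Real.norm_eq_abs]
    nlinarith [abs_nonneg r]
  refine Summable.of_norm_bounded (summable_pow_mul_geometric_of_norm_lt_one 1 hr2) fun k => ?_
  have hbk : b k ^ 2 ≤ 1 := by nlinarith [sq_abs (b k), abs_nonneg (b k), hb k]
  rw [pow_mul, pow_one, Real.norm_eq_abs, abs_of_nonneg (by positivity)]
  gcongr
  exact mul_le_of_le_one_right (Nat.cast_nonneg k) hbk

theorem bohr_improved_polynomial_sharpness_general
    {H : Type*} [NormedAddCommGroup H] [InnerProductSpace ℂ H]
    [Nontrivial H]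
    (l : ℕ) (c : ℕ → ℝ) (hc : ∀ m ∈ Finset.Icc 1 l, 0 ≤ c m)
    (r : ℝ) (hr1 : 1 / 3 < r) (hr2 : r < 1) :
    ∃ (f : ℂ → (H →L[ℂ] H)) (A : ℕ → (H →L[ℂ] H)) (a₀ : ℂ),
      (∀ z ∈ Metric.ball (0 : ℂ) 1, HasSum (fun k => z ^ k • A k) (f z)) ∧
      (∀ z ∈ Metric.ball (0 : ℂ) 1, ‖f z‖ ≤ 1) ∧
      A 0 = a₀ • (1 : H →L[ℂ] H) ∧ ‖a₀‖ < 1 ∧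
      Summable (fun k => ‖A k‖ * r ^ k) ∧
      Summable (fun k : ℕ => (k : ℝ) * ‖A k‖ ^ 2 * r ^ (2 * k)) ∧
      1 < ∑' k, ‖A k‖ * r ^ k +
            ∑ m ∈ Finset.Icc 1 l,
              c m * (∑' k : ℕ, (k : ℝ) * ‖A k‖ ^ 2 * r ^ (2 * k)) ^ m := by
  -- the midpoint of the threshold `(1 - r) / (2 r)` and `1`
  obtain ⟨a, ha0, ha1, hra⟩ : ∃ a : ℝ, 0 ≤ a ∧ a < 1 ∧ 1 < r * (1 + 2 * a) :=
    ⟨(1 + r) / (4 * r), by positivity, by rw [div_lt_one (by positivity)]; linarith,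
      by field_simp; linarith⟩
  have har : a * r < 1 := by nlinarith
  set A : ℕ → (H →L[ℂ] H) := fun k => (mobiusCoeff a k : ℂ) • 1
  have hA : ∀ k, ‖A k‖ = |mobiusCoeff a k| := fun k => by
    rw [Algebra.norm_smul_one_eq_norm, Complex.norm_real, Real.norm_eq_abs]
  have hbohr := hasSum_abs_mobiusCoeff_mul_pow ha0 ha1.le (by linarith) har
  refine ⟨fun z => ((a - z) / (1 - a * z) : ℂ) • 1, A, a, fun z hz => ?_, fun z hz => ?_, rfl,
    by simpa [abs_of_nonneg ha0] using ha1, by simpa only [hA] using hbohr.summable,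
    summable_natCast_mul_sq_mul_pow_two_mul (by simpa [hA] using abs_mobiusCoeff_le_one ha0 ha1.le)
      (by rw [abs_of_pos (by linarith)]; exact hr2), ?_⟩
  · have haz : ‖(a : ℂ) * z‖ < 1 := by
      rw [norm_mul, Complex.norm_real, Real.norm_eq_abs, abs_of_nonneg ha0]
      nlinarith [norm_nonneg z, mem_ball_zero_iff.mp hz]
    simpa only [A, smul_smul] using (hasSum_mobiusCoeff haz).smul_const (1 : H →L[ℂ] H)
  · rw [Algebra.norm_smul_one_eq_norm, norm_div]
    exact div_le_one_of_le₀ (norm_sub_le_norm_one_sub_mul (abs_le.mpr ⟨by linarith, ha1.le⟩)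
      (mem_ball_zero_iff.mp hz).le) (norm_nonneg _)
  · have hG : 0 ≤ ∑ m ∈ Finset.Icc 1 l,
        c m * (∑' k : ℕ, (k : ℝ) * |mobiusCoeff a k| ^ 2 * r ^ (2 * k)) ^ m :=
      Finset.sum_nonneg fun m hm =>
        mul_nonneg (hc m hm) (pow_nonneg (tsum_nonneg fun k => by positivity) m)
    simp only [hA, hbohr.tsum_eq]
    linarith [one_lt_mobius_bohrSum ha0 ha1 hr2 hra]

/-- Sharpness of the radius `1/3` in the improved operator valued Bohr inequality
with a polynomial `G(x) = ∑_{m=1}^l c_m x^m` whose nonnegative coefficients satisfy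
`∑_{m=1}^l 8(2m-1) c_m (3/8)^{2m} ≤ 1`: for every `r ∈ (1/3, 1)` there exists an
operator valued analytic function `f(z) = ∑ₖ Aₖ zᵏ` bounded by `1` on the unit disk
with `A₀ = a₀ I`, `|a₀| < 1`, such that
`∑ₖ ‖Aₖ‖ rᵏ + G(∑ₖ k ‖Aₖ‖² r^{2k}) > 1`. -/
theorem bohr_improved_polynomial_sharpness
    {H : Type*} [NormedAddCommGroup H] [InnerProductSpace ℂ H] [CompleteSpace H]
    [Nontrivial H]
    (l : ℕ) (hl : 1 ≤ l) (c : ℕ → ℝ) (hc : ∀ m ∈ Finset.Icc 1 l, 0 ≤ c m)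
    (hcsum : ∑ m ∈ Finset.Icc 1 l,
      8 * (2 * (m : ℝ) - 1) * c m * (3 / 8 : ℝ) ^ (2 * m) ≤ 1)
    (r : ℝ) (hr1 : 1 / 3 < r) (hr2 : r < 1) :
    ∃ (f : ℂ → (H →L[ℂ] H)) (A : ℕ → (H →L[ℂ] H)) (a₀ : ℂ),
      (∀ z ∈ Metric.ball (0 : ℂ) 1, HasSum (fun k => z ^ k • A k) (f z)) ∧
      (∀ z ∈ Metric.ball (0 : ℂ) 1, ‖f z‖ ≤ 1) ∧
      A 0 = a₀ • (1 : H →L[ℂ] H) ∧ ‖a₀‖ < 1 ∧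
      Summable (fun k => ‖A k‖ * r ^ k) ∧
      Summable (fun k : ℕ => (k : ℝ) * ‖A k‖ ^ 2 * r ^ (2 * k)) ∧
      1 < ∑' k, ‖A k‖ * r ^ k +
            ∑ m ∈ Finset.Icc 1 l,
              c m * (∑' k : ℕ, (k : ℝ) * ‖A k‖ ^ 2 * r ^ (2 * k)) ^ m :=
  bohr_improved_polynomial_sharpness_general l c hc r hr1 hr2
end

section
/- Let H be a complex Hilbert space and f : 𝔻 → 𝓑(H) an analytic function with power series expansion f(z) = ∑_{k=0}^∞ A_k z^k (A_k ∈ 𝓑(H)) satisfying ‖f(z)‖ ≤ 1 for all z ∈ 𝔻 and A₀ = a₀·I for some a₀ ∈ ℂ with |a₀| < 1. Then ‖A_n‖ ≤ 1 − |a₀|² for every integer n ≥ 1. -/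
/-!
Averaging `f` over the `n`-th roots of unity, `w = zⁿ ↦ n⁻¹ ∑ⱼ f(ωʲ z)`, gives a contraction-valued
function on the disk with coefficients `A₀, Aₙ, A₂ₙ, …`, so it suffices to treat `n = 1`. There the
operator Möbius map `T ↦ (T - a₀)(1 - ā₀ T)⁻¹` sends contractions to contractions and `g(0) = a₀ I`
to `0`; the Schwarz lemma bounds the norm of the derivative at `0` of the composite, which is
`A₁ / (1 - |a₀|²)`, by `1`.
-/

open Metric Set Finset ComplexConjugate

section Mobius

variable {R : Type*} [NormedRing R] [NormedAlgebra ℂ R]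

noncomputable def mobius (a : ℂ) (T : R) : R := (T - a • 1) * Ring.inverse (1 - conj a • T)

theorem mobius_smul_one (a : ℂ) : mobius a (a • (1 : R)) = 0 := by
  simp [mobius]

variable [HasSummableGeomSeries R]

theorem isUnit_one_sub_conj_smul {a : ℂ} (ha : ‖a‖ < 1) {T : R}
    (hT : ‖T‖ ≤ 1) : IsUnit (1 - conj a • T) := by
  refine (Units.oneSub _ ?_).isUnit
  rw [norm_smul, Complex.norm_conj]
  nlinarith [norm_nonneg a, norm_nonneg T]

theorem DifferentiableAt.mobius {g : ℂ → R} {z a : ℂ} (hg : DifferentiableAt ℂ g z)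
    (hu : IsUnit (1 - conj a • g z)) : DifferentiableAt ℂ (fun w => mobius a (g w)) z :=
  (hg.sub_const _).mul (((hg.const_smul (conj a)).const_sub 1).inverse hu)

theorem HasDerivAt.mobius {g : ℂ → R} {B : R} {z a : ℂ} (hg : HasDerivAt g B z)
    (hgz : g z = a • 1) (ha : ‖a‖ < 1) :
    HasDerivAt (fun w => mobius a (g w)) (((1 - ‖a‖ ^ 2 : ℝ) : ℂ)⁻¹ • B) z := by
  set c : ℂ := ((1 - ‖a‖ ^ 2 : ℝ) : ℂ)
  have hc : c ≠ 0 := by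
    have : ‖a‖ ^ 2 < 1 := by nlinarith [norm_nonneg a]
    exact Complex.ofReal_ne_zero.2 (by linarith)
  have hdenom : 1 - conj a • g z = algebraMap ℂ R c := by
    rw [hgz, smul_smul, Complex.conj_mul', Algebra.algebraMap_eq_smul_one]
    simp only [c, Complex.ofReal_sub, Complex.ofReal_one, Complex.ofReal_pow, sub_smul, one_smul]
  have hinv : Ring.inverse (1 - conj a • g z) = algebraMap ℂ R c⁻¹ := by
    simpa [hdenom] using Ring.inverse_unit (Units.map (algebraMap ℂ R : ℂ →* R) (Units.mk0 c hc))
  have hunit : IsUnit (1 - conj a • g z) := hdenom ▸ (IsUnit.mk0 c hc).map _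
  have := (hg.sub_const (a • 1)).mul
    (((hg.differentiableAt.const_smul (conj a)).const_sub 1).inverse hunit).hasDerivAt
  rw [hgz, sub_self, zero_mul, add_zero] at this
  refine this.congr_deriv ?_
  change B * Ring.inverse (1 - conj a • g z) = _
  rw [hinv, ← Algebra.commutes, ← Algebra.smul_def]

end Mobius

section Hilbert

variable {H : Type*} [NormedAddCommGroup H] [InnerProductSpace ℂ H]

theorem norm_sub_smul_le_norm_sub_conj_smul {a : ℂ} (ha : ‖a‖ ≤ 1) {u v : H}
    (huv : ‖v‖ ≤ ‖u‖) : ‖v - a • u‖ ≤ ‖u - conj a • v‖ := by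
  rw [← sq_le_sq₀ (norm_nonneg _) (norm_nonneg _), norm_sub_sq (𝕜 := ℂ), norm_sub_sq (𝕜 := ℂ),
    inner_smul_right, inner_smul_right, ← inner_conj_symm v u,
    show a * conj (inner ℂ u v) = conj (conj a * inner ℂ u v) by simp, RCLike.conj_re,
    norm_smul, norm_smul, Complex.norm_conj]
  nlinarith [mul_nonneg (sub_nonneg.2 (pow_le_one₀ (norm_nonneg a) ha : ‖a‖ ^ 2 ≤ 1))
    (sub_nonneg.2 (pow_le_pow_left₀ (norm_nonneg _) huv 2))]

variable [CompleteSpace H]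

theorem ContinuousLinearMap.norm_mobius_le_one {a : ℂ} (ha : ‖a‖ < 1) {T : H →L[ℂ] H}
    (hT : ‖T‖ ≤ 1) : ‖mobius a T‖ ≤ 1 := by
  obtain ⟨u, hu⟩ := isUnit_one_sub_conj_smul ha hT
  have key (x : H) : ‖(T - a • 1) x‖ ≤ ‖(u : H →L[ℂ] H) x‖ := by
    simpa [hu] using norm_sub_smul_le_norm_sub_conj_smul ha.le
      ((T.le_opNorm x).trans (mul_le_of_le_one_left (norm_nonneg x) hT))
  have hy (y : H) : (u : H →L[ℂ] H) ((↑u⁻¹ : H →L[ℂ] H) y) = y :=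
    DFunLike.congr_fun u.mul_inv y
  refine opNorm_le_bound _ zero_le_one fun y => ?_
  rw [one_mul, mobius, ← hu, Ring.inverse_unit]
  calc ‖(T - a • 1) ((↑u⁻¹ : H →L[ℂ] H) y)‖ ≤ ‖(u : H →L[ℂ] H) ((↑u⁻¹ : H →L[ℂ] H) y)‖ := key _
    _ = ‖y‖ := by rw [hy]

theorem ContinuousLinearMap.norm_le_one_sub_sq_of_hasDerivAt {g : ℂ → H →L[ℂ] H}
    {B : H →L[ℂ] H} {a : ℂ} (hd : DifferentiableOn ℂ g (ball 0 1))
    (hb : ∀ z ∈ ball (0 : ℂ) 1, ‖g z‖ ≤ 1) (ha : ‖a‖ < 1) (hg0 : g 0 = a • 1)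
    (hB : HasDerivAt g B 0) : ‖B‖ ≤ 1 - ‖a‖ ^ 2 := by
  have hF : DifferentiableOn ℂ (fun w => mobius a (g w)) (ball 0 1) := fun w hw =>
    ((hd.differentiableAt (isOpen_ball.mem_nhds hw)).mobius
      (isUnit_one_sub_conj_smul ha (hb w hw))).differentiableWithinAt
  have hmaps : MapsTo (fun w => mobius a (g w)) (ball 0 1) (closedBall (mobius a (g 0)) 1) :=
    fun w hw => by
      rw [hg0, mobius_smul_one, mem_closedBall, dist_zero_right]
      exact norm_mobius_le_one ha (hb w hw)
  have hpos : 0 < 1 - ‖a‖ ^ 2 := by nlinarith [norm_nonneg a]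
  have := Complex.norm_deriv_le_div_of_mapsTo_ball hF hmaps one_pos
  rwa [(hB.mobius hg0 ha).deriv, div_one, norm_smul, norm_inv, Complex.norm_real,
    Real.norm_of_nonneg hpos.le, inv_mul_le_iff₀ hpos, mul_one] at this

end Hilbert

section PowerSeries

variable {E : Type*} [NormedAddCommGroup E] [NormedSpace ℂ E]

noncomputable def coeffSeries (A : ℕ → E) : FormalMultilinearSeries ℂ ℂ E :=
  fun k => ContinuousMultilinearMap.mkPiRing ℂ (Fin k) (A k)

@[simp]
theorem coeffSeries_apply_const (A : ℕ → E) (k : ℕ) (z : ℂ) :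
    (coeffSeries A k fun _ => z) = z ^ k • A k := by
  simp [coeffSeries]

theorem hasFPowerSeriesOnBall_coeffSeries {f : ℂ → E} {A : ℕ → E} {r : NNReal} (hr : 0 < r)
    (hf : ∀ z ∈ ball (0 : ℂ) r, HasSum (fun k => z ^ k • A k) (f z)) :
    HasFPowerSeriesOnBall f (coeffSeries A) 0 r := by
  refine ⟨ENNReal.le_of_forall_nnreal_lt fun s hs => ?_, ENNReal.coe_pos.2 hr, fun hz => ?_⟩
  · have hs' : ((s : ℝ) : ℂ) ∈ ball (0 : ℂ) r := by
      simpa using (show (s : ℝ) < r by exact_mod_cast hs)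
    refine (coeffSeries A).le_radius_of_tendsto (l := 0) ?_
    simpa [coeffSeries, norm_smul, mul_comm] using
      (hf _ hs').summable.tendsto_atTop_zero.norm
  · rw [Metric.eball_coe] at hz
    simpa only [zero_add, coeffSeries_apply_const] using hf _ hz

end PowerSeries

theorem ContinuousLinearMap.norm_coeff_one_le {H : Type*} [NormedAddCommGroup H]
    [InnerProductSpace ℂ H] [CompleteSpace H] {g : ℂ → H →L[ℂ] H} {B : ℕ → H →L[ℂ] H}
    (hg : ∀ z ∈ ball (0 : ℂ) 1, HasSum (fun k => z ^ k • B k) (g z))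
    (hb : ∀ z ∈ ball (0 : ℂ) 1, ‖g z‖ ≤ 1) {a : ℂ} (ha : ‖a‖ < 1) (hB0 : B 0 = a • 1) :
    ‖B 1‖ ≤ 1 - ‖a‖ ^ 2 := by
  have hps : HasFPowerSeriesOnBall g (coeffSeries B) 0 1 :=
    hasFPowerSeriesOnBall_coeffSeries one_pos (by simpa using hg)
  have hg0 : g 0 = a • 1 := by
    simpa [coeffSeries, hB0] using (hps.hasFPowerSeriesAt.coeff_zero fun _ => 0).symm
  have hB1 : HasDerivAt g (B 1) 0 := by
    simpa only [coeffSeries_apply_const, one_pow, one_smul] using hps.hasFPowerSeriesAt.hasDerivAt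
  have hd : DifferentiableOn ℂ g (ball 0 1) := by
    simpa only [← ENNReal.coe_one, Metric.eball_coe, NNReal.coe_one] using hps.differentiableOn
  exact norm_le_one_sub_sq_of_hasDerivAt hd hb ha hg0 hB1

section Multisection

variable {E : Type*} [NormedAddCommGroup E] [NormedSpace ℂ E]

theorem IsPrimitiveRoot.geom_sum_pow_eq_zero {ω : ℂ} {n k : ℕ} (hω : IsPrimitiveRoot ω n)
    (hk : ¬ n ∣ k) : ∑ j ∈ range n, (ω ^ k) ^ j = 0 := by
  have hne : ω ^ k ≠ 1 := fun h => hk ((hω.pow_eq_one_iff_dvd k).1 h)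
  rw [geom_sum_eq hne, ← pow_mul, mul_comm, pow_mul, hω.pow_eq_one, one_pow, sub_self, zero_div]

theorem IsPrimitiveRoot.hasSum_multisection {ω : ℂ} {n : ℕ} (hω : IsPrimitiveRoot ω n)
    (hn : n ≠ 0) {f : ℂ → E} {A : ℕ → E} {z : ℂ}
    (hf : ∀ j, HasSum (fun k => (ω ^ j * z) ^ k • A k) (f (ω ^ j * z))) :
    HasSum (fun k => (z ^ n) ^ k • A (n * k)) ((n : ℂ)⁻¹ • ∑ j ∈ range n, f (ω ^ j * z)) := by
  have hsum : HasSum (fun k => (n : ℂ)⁻¹ • ((∑ j ∈ range n, (ω ^ k) ^ j) * z ^ k) • A k)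
      ((n : ℂ)⁻¹ • ∑ j ∈ range n, f (ω ^ j * z)) := by
    refine (hasSum_sum fun j _ => hf j).const_smul _ |>.congr_fun fun k => ?_
    simp only [Finset.sum_mul, Finset.sum_smul, mul_pow, pow_right_comm]
  have hvan : ∀ m ∉ Set.range (n * ·),
      (n : ℂ)⁻¹ • ((∑ j ∈ range n, (ω ^ m) ^ j) * z ^ m) • A m = 0 := fun m hm => by
    rw [hω.geom_sum_pow_eq_zero fun ⟨k, hk⟩ => hm ⟨k, hk.symm⟩, zero_mul, zero_smul, smul_zero]
  refine ((mul_right_injective₀ hn).hasSum_iff hvan).2 hsum |>.congr_fun fun k => ?_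
  have hnk : ∑ j ∈ range n, (ω ^ (n * k)) ^ j = n := by
    simp [(hω.pow_eq_one_iff_dvd _).2 (dvd_mul_right n k)]
  rw [Function.comp_apply, hnk, smul_smul, ← mul_assoc, inv_mul_cancel₀ (Nat.cast_ne_zero.2 hn),
    one_mul, pow_mul]

theorem exists_hasSum_multisection_norm_le_one {f : ℂ → E} {A : ℕ → E}
    (hf : ∀ z ∈ ball (0 : ℂ) 1, HasSum (fun k => z ^ k • A k) (f z))
    (hb : ∀ z ∈ ball (0 : ℂ) 1, ‖f z‖ ≤ 1) {n : ℕ} (hn : n ≠ 0) :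
    ∀ w ∈ ball (0 : ℂ) 1, ∃ S, HasSum (fun k => w ^ k • A (n * k)) S ∧ ‖S‖ ≤ 1 := by
  intro w hw
  obtain ⟨z, rfl⟩ := IsAlgClosed.exists_pow_nat_eq w (Nat.pos_of_ne_zero hn)
  obtain ⟨ω, hω⟩ : ∃ ω : ℂ, IsPrimitiveRoot ω n := ⟨_, Complex.isPrimitiveRoot_exp n hn⟩
  have hmem (j : ℕ) : ω ^ j * z ∈ ball (0 : ℂ) 1 := by
    rw [mem_ball_zero_iff, norm_mul, norm_pow, hω.norm'_eq_one hn, one_pow, one_mul]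
    rw [mem_ball_zero_iff, norm_pow] at hw
    exact (pow_lt_one_iff_of_nonneg (norm_nonneg z) hn).1 hw
  refine ⟨_, hω.hasSum_multisection hn fun j => hf _ (hmem j), ?_⟩
  rw [norm_smul, norm_inv, Complex.norm_natCast, inv_mul_le_one₀ (by positivity)]
  calc ‖∑ j ∈ range n, f _‖ ≤ ∑ j ∈ range n, ‖f _‖ := norm_sum_le _ _
    _ ≤ ∑ _j ∈ range n, 1 := Finset.sum_le_sum fun j _ => hb _ (hmem j)
    _ = n := by simp

end Multisection

/-- Coefficient estimate for operator valued bounded analytic functions: if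
`f(z) = ∑ₖ Aₖ zᵏ` is bounded by `1` on the unit disk and `A₀ = a₀ I` with
`|a₀| < 1`, then `‖Aₙ‖ ≤ 1 - |a₀|²` for every `n ≥ 1`. -/
theorem operator_coefficient_bound
    {H : Type*} [NormedAddCommGroup H] [InnerProductSpace ℂ H] [CompleteSpace H]
    (f : ℂ → (H →L[ℂ] H)) (A : ℕ → (H →L[ℂ] H))
    (hexp : ∀ z ∈ Metric.ball (0 : ℂ) 1, HasSum (fun k => z ^ k • A k) (f z))
    (hb : ∀ z ∈ Metric.ball (0 : ℂ) 1, ‖f z‖ ≤ 1)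
    (a₀ : ℂ) (ha₀ : ‖a₀‖ < 1) (hA0 : A 0 = a₀ • (1 : H →L[ℂ] H))
    (n : ℕ) (hn : 1 ≤ n) :
    ‖A n‖ ≤ 1 - ‖a₀‖ ^ 2 := by
  choose! g hg hgb using exists_hasSum_multisection_norm_le_one hexp hb (n := n) (by omega)
  simpa using ContinuousLinearMap.norm_coeff_one_le hg hgb ha₀ (by simpa using hA0)
end
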